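/- arXiv:0802.0966 — 3 statements merged into one kernel-verified Lean document; each statement's English description precedes it below -/
import Mathlib

section
/- Let $\beta > 1$, $\alpha \in \left(0, \frac{\beta - 1}{\beta + 1}\right)$, and let $h : [r_0,\infty) \to [1, \infty)$ be nondecreasing, $p_0 : [r_0,\infty) \to (0,\infty)$ nonincreasing with $p_0(r) \leq 1/r$, and $f : [r_0,\infty) \to [r_0,\infty)$ satisfy $f(r) \geq \max(r, (p_0 h)(r)^{\beta})$. Then the function $r \mapsto h(r)^{\alpha} (p_0 h)(r) \, p_0(f(r))$ is bounded on $[r_0, \infty)$. -/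
/-! Put `x = p₀(r) h(r)`. If `h^α ≤ x^(β-1)`, then `f(r) ≥ x^β` and `p₀ ≤ 1/r` give
`p₀(f r) ≤ x^(-β)`, so the product is at most `x^(β-1) · x · x^(-β) = 1`. Otherwise
`x ≤ h^(α/(β-1))`, hence `p₀(r) ≤ h^(α/(β-1) - 1)`, and monotonicity gives `p₀(f r) ≤ p₀(r)`;
the product is then at most a power of `h ≥ 1` whose exponent `α + 2α/(β-1) - 1` is
nonpositive exactly when `α (β+1) ≤ β - 1`. -/

open Real

lemma le_rpow_div_of_rpow_sub_one_lt {x H α β : ℝ} (hβ : 1 < β) (hx : 0 ≤ x) (hH : 0 ≤ H)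
    (hlt : x ^ (β - 1) < H ^ α) : x ≤ H ^ (α / (β - 1)) := by
  rw [div_eq_mul_inv, rpow_mul hH, le_rpow_inv_iff_of_pos hx (rpow_nonneg hH α) (by linarith)]
  exact hlt.le

lemma add_div_add_div_sub_one_nonpos {α β : ℝ} (hβ : 1 < β) (hαβ : α * (β + 1) ≤ β - 1) :
    α + α / (β - 1) + (α / (β - 1) - 1) ≤ 0 := by
  have hβ1 : 0 < β - 1 := by linarith
  have hsum : α + α / (β - 1) + (α / (β - 1) - 1) = (α * (β + 1) - (β - 1)) / (β - 1) := by
    field_simp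
    ring
  rw [hsum]
  exact div_nonpos_of_nonpos_of_nonneg (by linarith) hβ1.le

lemma mul_mul_le_one_of_le_rpow_sub_one {a x Q β : ℝ} (hx : 0 < x) (ha : a ≤ x ^ (β - 1))
    (hQ : 0 ≤ Q) (hQx : Q ≤ (x ^ β)⁻¹) : a * x * Q ≤ 1 := by
  calc a * x * Q ≤ x ^ (β - 1) * x * (x ^ β)⁻¹ := by gcongr
    _ = 1 := by
      rw [rpow_sub_one hx.ne', div_mul_cancel₀ _ hx.ne', mul_inv_cancel₀ (rpow_pos_of_pos hx β).ne']

/-- The pointwise form of the estimate, with `H = h r`, `P = p₀ r` and `Q = p₀ (f r)`. -/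
lemma rpow_mul_mul_le_one {α β H P Q : ℝ} (hβ : 1 < β) (hαβ : α * (β + 1) ≤ β - 1)
    (hH : 1 ≤ H) (hP : 0 < P) (hQ : 0 ≤ Q) (hQP : Q ≤ P) (hQx : Q ≤ ((P * H) ^ β)⁻¹) :
    H ^ α * (P * H) * Q ≤ 1 := by
  have hH0 : 0 < H := one_pos.trans_le hH
  have hx : 0 < P * H := mul_pos hP hH0
  rcases le_or_gt (H ^ α) ((P * H) ^ (β - 1)) with hsmall | hlarge
  · exact mul_mul_le_one_of_le_rpow_sub_one hx hsmall hQ hQx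
  · set e := α / (β - 1)
    have hxle : P * H ≤ H ^ e := le_rpow_div_of_rpow_sub_one_lt hβ hx.le hH0.le hlarge
    have hPle : P ≤ H ^ (e - 1) := by
      rw [rpow_sub_one hH0.ne', le_div_iff₀ hH0]
      exact hxle
    calc H ^ α * (P * H) * Q ≤ H ^ α * H ^ e * H ^ (e - 1) := by
          gcongr
          exact hQP.trans hPle
      _ = H ^ (α + e + (e - 1)) := by rw [rpow_add hH0, rpow_add hH0]
      _ ≤ 1 := rpow_le_one_of_one_le_of_nonpos hH (add_div_add_div_sub_one_nonpos hβ hαβ)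

theorem bounded_key_estimate_general (β α r0 : ℝ) (hβ : 1 < β)
    (hα : α ∈ Set.Ioo (0:ℝ) ((β - 1) / (β + 1)))
    (h p0 f : ℝ → ℝ)
    (hh1 : ∀ r ≥ r0, 1 ≤ h r)
    (hp0pos : ∀ r ≥ r0, 0 < p0 r) (hp0anti : AntitoneOn p0 (Set.Ici r0))
    (hp0le : ∀ r ≥ r0, p0 r ≤ 1 / r)
    (hfge : ∀ r ≥ r0, f r ≥ max r ((p0 r * h r) ^ β)) :
    ∃ C : ℝ, ∀ r ≥ r0, h r ^ α * (p0 r * h r) * p0 (f r) ≤ C := by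
  have hαβ : α * (β + 1) ≤ β - 1 := ((lt_div_iff₀ (by linarith)).mp hα.2).le
  refine ⟨1, fun r hr => ?_⟩
  obtain ⟨hfr, hfx⟩ := max_le_iff.mp (hfge r hr)
  have hfr0 : f r ≥ r0 := hr.trans hfr
  have hxβ : 0 < (p0 r * h r) ^ β :=
    rpow_pos_of_pos (mul_pos (hp0pos r hr) (one_pos.trans_le (hh1 r hr))) β
  have hQx : p0 (f r) ≤ ((p0 r * h r) ^ β)⁻¹ :=
    (hp0le _ hfr0).trans ((one_div (f r)).trans_le (inv_anti₀ hxβ hfx))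
  exact rpow_mul_mul_le_one hβ hαβ (hh1 r hr) (hp0pos r hr) (hp0pos _ hfr0).le
    (hp0anti hr hfr0 hfr) hQx

theorem bounded_key_estimate (β α r0 : ℝ) (hβ : 1 < β)
    (hα : α ∈ Set.Ioo (0:ℝ) ((β - 1) / (β + 1)))
    (h p0 f : ℝ → ℝ)
    (hh1 : ∀ r ≥ r0, 1 ≤ h r) (hhmono : MonotoneOn h (Set.Ici r0))
    (hp0pos : ∀ r ≥ r0, 0 < p0 r) (hp0anti : AntitoneOn p0 (Set.Ici r0))
    (hp0le : ∀ r ≥ r0, p0 r ≤ 1 / r)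
    (hfmaps : ∀ r ≥ r0, f r ∈ Set.Ici r0)
    (hfge : ∀ r ≥ r0, f r ≥ max r ((p0 r * h r) ^ β)) :
    ∃ C : ℝ, ∀ r ≥ r0, h r ^ α * (p0 r * h r) * p0 (f r) ≤ C :=
  bounded_key_estimate_general β α r0 hβ hα h p0 f hh1 hp0pos hp0anti hp0le hfge
end

section
/- Let $\beta > 1$, $\alpha \in \left(0, \frac{\beta-1}{2(\beta+1)}\right)$. Let $h : [r_0,\infty) \to [1,\infty)$ be nondecreasing with $h(r) \to \infty$, $p_0 : [r_0,\infty) \to (0,1]$ nonincreasing with $p_0(r) \leq 1/r$, and $f(r) \geq \max(r, (p_0 h)(r)^\beta)$. Then $(p_0 h)(r)^{1/2} (p_0 \circ f)(r)^{1/2} \leq h(r)^{-\alpha}$ for all sufficiently large $r$. -/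
theorem sqrt_bound_eventually (β α r0 : ℝ) (hβ : 1 < β)
    (hα : α ∈ Set.Ioo (0:ℝ) ((β - 1) / (2 * (β + 1))))
    (h p0 f : ℝ → ℝ)
    (hh1 : ∀ r ≥ r0, 1 ≤ h r) (hhmono : MonotoneOn h (Set.Ici r0))
    (hhtop : Filter.Tendsto h Filter.atTop Filter.atTop)
    (hp0pos : ∀ r ≥ r0, 0 < p0 r) (hp0le1 : ∀ r ≥ r0, p0 r ≤ 1)
    (hp0anti : AntitoneOn p0 (Set.Ici r0))
    (hp0ler : ∀ r ≥ r0, p0 r ≤ 1 / r)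
    (hfmaps : ∀ r ≥ r0, f r ∈ Set.Ici r0)
    (hfge : ∀ r ≥ r0, f r ≥ max r ((p0 r * h r) ^ β)) :
    ∃ r1 ≥ r0, ∀ r ≥ r1,
      Real.sqrt (p0 r * h r) * Real.sqrt (p0 (f r)) ≤ h r ^ (-α) := by
  obtain ⟨hα0, hα2⟩ := hα
  have hβ1 : (0:ℝ) < β + 1 := by linarith
  refine ⟨r0, le_refl _, fun r hr => ?_⟩
  have hr0 : r ∈ Set.Ici r0 := hr
  have hfr : f r ∈ Set.Ici r0 := hfmaps r hr
  have h1 : (1:ℝ) ≤ h r := hh1 r hr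
  have hpos : (0:ℝ) < h r := by linarith
  have hp0r : 0 < p0 r := hp0pos r hr
  set t := p0 r * h r with ht
  have htpos : 0 < t := mul_pos hp0r hpos
  have hrle : r ≤ f r := le_trans (le_max_left _ _) (hfge r hr)
  have hft : t ^ β ≤ f r := le_trans (le_max_right _ _) (hfge r hr)
  have hfpos : 0 < f r := lt_of_lt_of_le (Real.rpow_pos_of_pos htpos β) hft
  have hu : 0 < p0 (f r) := hp0pos _ hfr
  have hupr : p0 (f r) ≤ p0 r := hp0anti hr0 hfr hrle
  have h2a : 2 * α ≤ (β - 1) / (β + 1) := by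
    rw [lt_div_iff₀ (by linarith : (0:ℝ) < 2 * (β + 1))] at hα2
    rw [le_div_iff₀ hβ1]
    nlinarith
  have key : t * p0 (f r) ≤ h r ^ (-(2 * α)) := by
    have step : t * p0 (f r) ≤ h r ^ (-((β - 1) / (β + 1))) := by
      rcases le_or_gt t (h r ^ ((1:ℝ) / (β + 1))) with hc | hc
      · have hur : p0 (f r) ≤ t / h r := by
          rw [ht, mul_div_assoc, div_self hpos.ne', mul_one]; exact hupr
        calc t * p0 (f r) ≤ t * (t / h r) :=
              mul_le_mul_of_nonneg_left hur htpos.le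
          _ = t ^ (2:ℝ) / h r := by
              rw [Real.rpow_two]; ring
          _ ≤ (h r ^ ((1:ℝ) / (β + 1))) ^ (2:ℝ) / h r := by
              gcongr
          _ = h r ^ (-((β - 1) / (β + 1))) := by
              rw [← Real.rpow_mul hpos.le, div_eq_iff hpos.ne',
                ← Real.rpow_add_one hpos.ne']
              congr 1
              field_simp
              ring
      · have hub : p0 (f r) ≤ t ^ (-β) := by
          calc p0 (f r) ≤ 1 / f r := hp0ler _ hfr
            _ ≤ 1 / t ^ β := by
                apply div_le_div_of_nonneg_left one_pos.le (Real.rpow_pos_of_pos htpos β) hft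
            _ = t ^ (-β) := by rw [Real.rpow_neg htpos.le, one_div]
        calc t * p0 (f r) ≤ t * t ^ (-β) :=
              mul_le_mul_of_nonneg_left hub htpos.le
          _ = t ^ (1 - β) := by
              nth_rewrite 1 [← Real.rpow_one t]
              rw [← Real.rpow_add htpos]
              ring_nf
          _ ≤ (h r ^ ((1:ℝ) / (β + 1))) ^ (1 - β) := by
              apply Real.rpow_le_rpow_of_nonpos (Real.rpow_pos_of_pos hpos _) hc.le
              linarith
          _ = h r ^ (-((β - 1) / (β + 1))) := by
              rw [← Real.rpow_mul hpos.le]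
              ring_nf
    refine step.trans (Real.rpow_le_rpow_of_exponent_le h1 ?_)
    rw [neg_le_neg_iff]
    exact h2a
  have hprod : Real.sqrt t * Real.sqrt (p0 (f r)) = Real.sqrt (t * p0 (f r)) :=
    (Real.sqrt_mul htpos.le _).symm
  rw [hprod]
  have : Real.sqrt (t * p0 (f r)) ≤ Real.sqrt (h r ^ (-(2 * α))) :=
    Real.sqrt_le_sqrt key
  refine this.trans_eq ?_
  rw [Real.sqrt_eq_rpow, ← Real.rpow_mul hpos.le]
  congr 1
  ring
end

section
/- Let $r(t) = r_0 + t$ and suppose $s : [0,\infty) \to \mathbb{R}$ solves $\dot{s}(t) = F(r(t), s(t))$ where $F : \mathbb{R}_+ \times \mathbb{R} \to [0, \infty)$ is continuous, and suppose there is a continuous $p : \mathbb{R}_+ \times \mathbb{R} \to [0,1]$ with $|F(r,s) - p(r,s)| \leq \frac{p(r,s)}{1 + \cosh^2 r}$, $p$ nondecreasing in $s$, and $\int_0^\infty p(r, s_0)\, dr = \infty$ for every $s_0$. Then $s(t) \to \infty$ as $t \to \infty$. -/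
/-!
Since $|F - p| \le p/(1 + \cosh^2 r) \le p/2$, the speed satisfies $\dot s \ge p(r, s)/2 \ge 0$.
Hence $s$ is nondecreasing, so $p(r, s(t)) \ge p(r, s(0))$ by monotonicity of $p$, and comparing
derivatives gives $s(t) \ge s(0) + \tfrac12 \int_0^t p(r_0 + u, s(0))\,du$, which diverges.
-/

open Filter Set

lemma half_le_of_abs_sub_le_div {a b c : ℝ} (ha : 0 ≤ a) (hc : 2 ≤ c) (h : |b - a| ≤ a / c) :
    a / 2 ≤ b := by
  have : a / c ≤ a / 2 := div_le_div_of_nonneg_left ha two_pos hc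
  linarith [(abs_le.1 h).1]

lemma two_le_one_add_cosh_sq (r : ℝ) : 2 ≤ 1 + Real.cosh r ^ 2 := by
  nlinarith [Real.one_le_cosh r]

lemma monotoneOn_of_hasDerivAt_nonneg {D : Set ℝ} (hD : Convex ℝ D) {f f' : ℝ → ℝ}
    (hf : ∀ x ∈ D, HasDerivAt f (f' x) x) (hf'₀ : ∀ x ∈ D, 0 ≤ f' x) : MonotoneOn f D :=
  monotoneOn_of_hasDerivWithinAt_nonneg hD
    (fun x hx => (hf x hx).continuousAt.continuousWithinAt)
    (fun x hx => (hf x (interior_subset hx)).hasDerivWithinAt)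
    (fun x hx => hf'₀ x (interior_subset hx))

lemma tendsto_integral_comp_add_left_atTop {g : ℝ → ℝ} (hg : Continuous g)
    (hdiv : Tendsto (fun t => ∫ r in (0:ℝ)..t, g r) atTop atTop) (d : ℝ) :
    Tendsto (fun t => ∫ u in (0:ℝ)..t, g (d + u)) atTop atTop := by
  have hshift : ∀ t, (∫ u in (0:ℝ)..t, g (d + u))
      = (∫ r in (0:ℝ)..(d + t), g r) - ∫ r in (0:ℝ)..d, g r := fun t => by
    rw [intervalIntegral.integral_comp_add_left, add_zero,
      intervalIntegral.integral_interval_sub_left (hg.intervalIntegrable _ _)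
        (hg.intervalIntegrable _ _)]
  simp only [hshift]
  exact tendsto_atTop_add_const_right _ _
    (hdiv.comp (tendsto_atTop_add_const_left _ d tendsto_id))

theorem trajectory_s_tendsto_atTop_general
    (r0 : ℝ) (hr0 : 0 ≤ r0)
    (s : ℝ → ℝ) (F p : ℝ → ℝ → ℝ)
    (hp : Continuous (fun x : ℝ × ℝ => p x.1 x.2))
    (hprange : ∀ r ≥ (0:ℝ), ∀ z : ℝ, p r z ∈ Set.Icc (0:ℝ) 1)
    (hclose : ∀ r ≥ (0:ℝ), ∀ z : ℝ,
        |F r z - p r z| ≤ p r z / (1 + Real.cosh r ^ 2))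
    (hpmono : ∀ r ≥ (0:ℝ), Monotone (p r))
    (hpdiv : ∀ s0 : ℝ,
        Filter.Tendsto (fun t => ∫ r in (0:ℝ)..t, p r s0)
          Filter.atTop Filter.atTop)
    (hode : ∀ t ≥ (0:ℝ), HasDerivAt s (F (r0 + t) (s t)) t) :
    Filter.Tendsto s Filter.atTop Filter.atTop := by
  have hr : ∀ t ≥ (0:ℝ), 0 ≤ r0 + t := fun t ht => add_nonneg hr0 ht
  have hFp : ∀ t ≥ (0:ℝ), p (r0 + t) (s t) / 2 ≤ F (r0 + t) (s t) := fun t ht =>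
    half_le_of_abs_sub_le_div (hprange _ (hr t ht) _).1 (two_le_one_add_cosh_sq _)
      (hclose _ (hr t ht) _)
  have hs_mono : MonotoneOn s (Ici 0) :=
    monotoneOn_of_hasDerivAt_nonneg (convex_Ici 0) hode fun t ht =>
      (div_nonneg (hprange _ (hr t ht) _).1 two_pos.le).trans (hFp t ht)
  have hg : Continuous fun u => p (r0 + u) (s 0) :=
    hp.comp ((continuous_const.add continuous_id).prodMk continuous_const)
  set I := fun t => ∫ u in (0:ℝ)..t, p (r0 + u) (s 0)
  have hcomp : MonotoneOn (fun t => s t - I t / 2) (Ici 0) := by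
    refine monotoneOn_of_hasDerivAt_nonneg (convex_Ici 0)
      (fun t ht => (hode t ht).sub ((hg.integral_hasStrictDerivAt 0 t).hasDerivAt.div_const 2))
      fun t ht => ?_
    have := hpmono _ (hr t ht) (hs_mono self_mem_Ici ht ht)
    linarith [hFp t ht]
  have hlower : ∀ t ≥ (0:ℝ), s 0 + I t / 2 ≤ s t := fun t ht => by
    have := hcomp self_mem_Ici ht ht
    simp only [I, intervalIntegral.integral_same] at this
    linarith
  refine tendsto_atTop_mono' _ (eventually_atTop.2 ⟨0, hlower⟩) ?_
  exact tendsto_atTop_add_const_left _ _ <|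
    (tendsto_integral_comp_add_left_atTop (hp.comp (continuous_id.prodMk continuous_const))
      (hpdiv (s 0)) r0).atTop_div_const two_pos

theorem trajectory_s_tendsto_atTop
    (r0 : ℝ) (hr0 : 0 ≤ r0)
    (s : ℝ → ℝ) (F p : ℝ → ℝ → ℝ)
    (hF : Continuous (fun x : ℝ × ℝ => F x.1 x.2))
    (hFnonneg : ∀ r ≥ (0:ℝ), ∀ z : ℝ, 0 ≤ F r z)
    (hp : Continuous (fun x : ℝ × ℝ => p x.1 x.2))
    (hprange : ∀ r ≥ (0:ℝ), ∀ z : ℝ, p r z ∈ Set.Icc (0:ℝ) 1)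
    (hclose : ∀ r ≥ (0:ℝ), ∀ z : ℝ,
        |F r z - p r z| ≤ p r z / (1 + Real.cosh r ^ 2))
    (hpmono : ∀ r ≥ (0:ℝ), Monotone (p r))
    (hpdiv : ∀ s0 : ℝ,
        Filter.Tendsto (fun t => ∫ r in (0:ℝ)..t, p r s0)
          Filter.atTop Filter.atTop)
    (hode : ∀ t ≥ (0:ℝ), HasDerivAt s (F (r0 + t) (s t)) t) :
    Filter.Tendsto s Filter.atTop Filter.atTop :=
  trajectory_s_tendsto_atTop_general r0 hr0 s F p hp hprange hclose hpmono hpdiv hode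
end
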